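/- Let Δx > 0 and let p be the unique quadratic polynomial satisfying (1/Δx)∫_{x_i-Δx/2}^{x_i+Δx/2} p = f_i, (1/Δx)∫_{x_{i+1}-Δx/2}^{x_{i+1}+Δx/2} p = f_{i+1}, and (1/Δx)∫_{x_i-Δx/2}^{x_i+Δx/2} p' = h_i, where x_{i+1} = x_i + Δx. Then p(x_i + Δx/2) = (5/6) f_i + (1/6) f_{i+1} + (1/3) Δx h_i. -/

import Mathlib

/-!
Write `p = c + b x + a x²`. Each cell average, and the derivative average (which by the
fundamental theorem of calculus is `(p(x_{i+1/2}) - p(x_{i-1/2})) / Δx`), is an explicit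
linear form in `a, b, c`; the claimed combination of them reproduces `p(x_{i+1/2})`.
-/

open intervalIntegral

namespace Polynomial

theorem eval_eq_of_natDegree_le_two {R : Type*} [Semiring R] {p : R[X]} (hp : p.natDegree ≤ 2)
    (x : R) : p.eval x = p.coeff 0 + p.coeff 1 * x + p.coeff 2 * x ^ 2 := by
  rw [eval_eq_sum_range' (Nat.lt_succ_of_le hp)]
  simp [Finset.sum_range_succ]

theorem integral_eval_eq_sum_range {p : ℝ[X]} {n : ℕ} (hn : p.natDegree < n) (l u : ℝ) :
    ∫ x in l..u, p.eval x =
      ∑ i ∈ Finset.range n, p.coeff i * (u ^ (i + 1) - l ^ (i + 1)) / (i + 1) := by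
  simp_rw [eval_eq_sum_range' hn]
  rw [integral_finsetSum fun i _ =>
    ((continuous_pow i).const_mul (p.coeff i)).intervalIntegrable l u]
  refine Finset.sum_congr rfl fun i _ => ?_
  rw [integral_const_mul, integral_pow, mul_div_assoc]

theorem integral_eval_of_natDegree_le_two {p : ℝ[X]} (hp : p.natDegree ≤ 2) (l u : ℝ) :
    ∫ x in l..u, p.eval x =
      p.coeff 0 * (u - l) + p.coeff 1 * (u ^ 2 - l ^ 2) / 2 + p.coeff 2 * (u ^ 3 - l ^ 3) / 3 := by
  rw [integral_eval_eq_sum_range (Nat.lt_succ_of_le hp)]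
  simp only [Finset.sum_range_succ, Finset.sum_range_zero]
  norm_num

theorem integral_eval_derivative (p : ℝ[X]) (l u : ℝ) :
    ∫ x in l..u, (derivative p).eval x = p.eval u - p.eval l :=
  integral_eq_sub_of_hasDerivAt (fun x _ => p.hasDerivAt x)
    ((derivative p).continuous.intervalIntegrable _ _)

end Polynomial

theorem stmt_1 (Δx xi fi fip1 hi : ℝ) (hΔ : 0 < Δx)
    (p : Polynomial ℝ) (hdeg : p.natDegree ≤ 2)
    (h1 : (1 / Δx) * ∫ x in (xi - Δx / 2)..(xi + Δx / 2), p.eval x = fi)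
    (h2 : (1 / Δx) * ∫ x in ((xi + Δx) - Δx / 2)..((xi + Δx) + Δx / 2), p.eval x = fip1)
    (h3 : (1 / Δx) * ∫ x in (xi - Δx / 2)..(xi + Δx / 2), (Polynomial.derivative p).eval x = hi) :
    p.eval (xi + Δx / 2) = (5 / 6) * fi + (1 / 6) * fip1 + (1 / 3) * Δx * hi := by
  rw [Polynomial.integral_eval_of_natDegree_le_two hdeg] at h1 h2
  rw [Polynomial.integral_eval_derivative] at h3
  simp only [Polynomial.eval_eq_of_natDegree_le_two hdeg] at h3 ⊢
  rw [one_div_mul_eq_div, div_eq_iff hΔ.ne'] at h1 h2 h3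
  apply mul_left_cancel₀ hΔ.ne'
  linear_combination (5 / 6) * h1 + (1 / 6) * h2 + (Δx / 3) * h3
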